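/- Let n ≥ 2 and let W_1, …, W_n be positive reals. Set D = Σ_{i=1}^n W_i, C = Σ_{i=1}^n 1/W_i, and p_i = (D/W_i − (n−2))/(DC − n(n−2)) for each i ∈ [n] (the denominator is positive since DC ≥ n² > n(n−2) by the Cauchy–Schwarz inequality). Then Σ_{i=1}^n p_i = 1, and for every i ∈ [n], Σ_{j≠i} (1 + W_j/W_i)·p_j = (DC − (n−2)²)/(DC − n(n−2)); in particular the vector (p_1,…,p_n) solves the linear system requiring Σ_{j≠i}(1 + W_j/W_i)·p_j to be the same for every row i. (Lemma 1.7 / Lemma 3.1.) -/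
import Mathlib


/-- **Lemma 1.7 / Lemma 3.1** (explicit solution to the linear system).
With `D = Σ W i`, `C = Σ 1/W i`, and `p i = (D/W i − (n−2))/(DC − n(n−2))`,
the `p i` sum to `1` and for every row `i`,
`Σ_{j≠i} (1 + W j / W i)·p j = (DC − (n−2)²)/(DC − n(n−2))`,
so in particular this quantity is the same for every row. -/
theorem explicit_linear_system_solution (n : ℕ) (hn : 2 ≤ n)
    (W : Fin n → ℝ) (hW : ∀ i, 0 < W i)
    (D C : ℝ) (hD : D = ∑ i, W i) (hC : C = ∑ i, (W i)⁻¹)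
    (p : Fin n → ℝ)
    (hp : ∀ i, p i = (D / W i - ((n : ℝ) - 2)) / (D * C - (n : ℝ) * ((n : ℝ) - 2))) :
    (∑ i, p i = 1) ∧
    ∀ i : Fin n,
      ∑ j ∈ Finset.univ.erase i, (1 + W j / W i) * p j
        = (D * C - ((n : ℝ) - 2) ^ 2) / (D * C - (n : ℝ) * ((n : ℝ) - 2)) := by
  -- Cauchy–Schwarz: n² ≤ D·C
  have hcs : ((n : ℝ)) ^ 2 ≤ D * C := by
    have h := Finset.sum_sq_le_sum_mul_sum_of_sq_eq_mul (Finset.univ : Finset (Fin n))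
      (r := fun _ => (1 : ℝ)) (f := W) (g := fun i => (W i)⁻¹)
      (fun i _ => (hW i).le) (fun i _ => (inv_pos.mpr (hW i)).le)
      (fun i _ => by rw [one_pow, mul_inv_cancel₀ (hW i).ne'])
    simpa [hD, hC] using h
  have hn2 : (2 : ℝ) ≤ (n : ℝ) := by exact_mod_cast hn
  have hK : 0 < D * C - (n : ℝ) * ((n : ℝ) - 2) := by nlinarith
  have hKne := hK.ne'
  -- Sum of the p i
  have hsum1 : ∑ i, p i = 1 := by
    have : ∑ i, p i = (D * C - (n : ℝ) * ((n : ℝ) - 2)) /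
        (D * C - (n : ℝ) * ((n : ℝ) - 2)) := by
      simp only [hp]
      rw [← Finset.sum_div]
      congr 1
      rw [Finset.sum_sub_distrib, Finset.sum_const]
      have : ∑ i, D / W i = D * C := by
        simp only [div_eq_mul_inv, ← Finset.mul_sum, hC]
      simp [this]
    rw [this, div_self hKne]
  refine ⟨hsum1, fun i => ?_⟩
  -- Sum of W j * p j
  have hsumW : ∑ j, W j * p j = 2 * D / (D * C - (n : ℝ) * ((n : ℝ) - 2)) := by
    have h1 : ∀ j, W j * p j = (D - ((n : ℝ) - 2) * W j) /
        (D * C - (n : ℝ) * ((n : ℝ) - 2)) := by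
      intro j
      rw [hp j, mul_div_assoc']
      congr 1
      rw [mul_sub, mul_comm (W j) (D / W j), div_mul_cancel₀ D (hW j).ne']
      ring
    simp only [h1]
    rw [← Finset.sum_div]
    congr 1
    rw [Finset.sum_sub_distrib, Finset.sum_const, ← Finset.mul_sum, ← hD]
    simp
    ring
  have hWi := (hW i).ne'
  have hsplit : ∑ j ∈ Finset.univ.erase i, (1 + W j / W i) * p j
      = (∑ j, (1 + W j / W i) * p j) - 2 * p i := by
    rw [Finset.sum_erase_eq_sub (Finset.mem_univ i)]
    have : (1 + W i / W i) * p i = 2 * p i := by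
      rw [div_self hWi]; ring
    rw [this]
  rw [hsplit]
  have hfull : ∑ j, (1 + W j / W i) * p j = (∑ j, p j) + (∑ j, W j * p j) / W i := by
    rw [Finset.sum_div, ← Finset.sum_add_distrib]
    congr 1
    ext j
    field_simp
  rw [hfull, hsum1, hsumW, hp i]
  field_simp
  ring
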